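/- Let N be a strictly convex C^1-regular norm on ℝ^n and let w ∈ S^{n-1}, V = w⊥. Then the closest-point projection P^N_V : ℝ^n → V is a linear and surjective map onto V, and its kernel is the line ℝ·v spanned by the unique point v ∈ S_N with G(v) = w (i.e., ker P^N_V = ℝ·G^{-1}(w)). -/

import Mathlib

/-!
The vector `u = w - P w` minimises `N` on the affine hyperplane `⟪z, w⟫ = 1`, so by homogeneity
`c • u` minimises `N` on `⟪z, w⟫ = c`. Strict convexity makes minimisers of `N` on a convex set
unique, and `x - P x` minimises `N` on `⟪z, w⟫ = ⟪x, w⟫`; hence `P x = x - ⟪x, w⟫ • u`.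

At `v = (N u)⁻¹ • u` the gradient of `N` is normal to the level hyperplane of `v`, hence a multiple
of `w`, and Euler's relation `⟪∇N v, v⟫ = N v` makes the factor `N u > 0`. Conversely, if `∇N v'` is
a nonnegative multiple of `w`, the gradient inequality for the convex function `N` makes `v'` a
minimiser on its level hyperplane, hence a multiple of `u`.
-/
open Set Filter Topology
open scoped RealInnerProductSpace

namespace Seminorm

section Module

variable {E : Type*} [AddCommGroup E] [Module ℝ E] {p : Seminorm ℝ E}

def IsStrictlyConvex (p : Seminorm ℝ E) : Prop :=
  ∀ x y, p x = 1 → p y = 1 → x ≠ y → p ((1 / 2 : ℝ) • (x + y)) < 1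

theorem apply_pos_of_ne_zero (hp0 : ∀ x, p x = 0 → x = 0) {x : E} (hx : x ≠ 0) : 0 < p x :=
  (apply_nonneg p x).lt_of_ne fun h => hx (hp0 x h.symm)

theorem apply_inv_smul_self {x : E} (hx : 0 < p x) : p ((p x)⁻¹ • x) = 1 := by
  rw [map_smul_eq_mul, Real.norm_of_nonneg (inv_nonneg.2 hx.le), inv_mul_cancel₀ hx.ne']

theorem midpoint_lt_of_strictConvex
    (hsc : p.IsStrictlyConvex)
    {a b : E} (hab : a ≠ b) (h : p a = p b) (ha : 0 < p a) :
    p ((1 / 2 : ℝ) • (a + b)) < p a := by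
  have hscale : ∀ x, p ((p a)⁻¹ • x) = (p a)⁻¹ * p x := fun x => by
    rw [map_smul_eq_mul, Real.norm_of_nonneg (inv_nonneg.2 ha.le)]
  have hlt := hsc ((p a)⁻¹ • a) ((p a)⁻¹ • b)
    (by rw [hscale, inv_mul_cancel₀ ha.ne']) (by rw [hscale, ← h, inv_mul_cancel₀ ha.ne'])
    fun he => hab (smul_right_injective E (inv_ne_zero ha.ne') he)
  rwa [← smul_add, smul_comm, hscale, inv_mul_lt_one₀ ha] at hlt

theorem eq_of_isMinOn_of_strictConvex (hp0 : ∀ x, p x = 0 → x = 0)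
    (hsc : p.IsStrictlyConvex)
    {s : Set E} (hs : Convex ℝ s) {a b : E} (ha : a ∈ s) (hb : b ∈ s)
    (hma : IsMinOn p s a) (hmb : IsMinOn p s b) : a = b := by
  have hab : p a = p b := le_antisymm (hma hb) (hmb ha)
  rcases (apply_nonneg p a).eq_or_lt with h0 | hpos
  · rw [hp0 a h0.symm, hp0 b (hab ▸ h0.symm)]
  by_contra hne
  have hmid : (1 / 2 : ℝ) • (a + b) ∈ s := by
    rw [smul_add]; exact hs ha hb (by norm_num) (by norm_num) (by norm_num)
  exact (hma hmid).not_gt (midpoint_lt_of_strictConvex hsc hne hab hpos)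

theorem isMinOn_smul_of_isMinOn_level_one (f : E →ₗ[ℝ] ℝ) {u : E}
    (hu : IsMinOn p {z | f z = 1} u) (c : ℝ) : IsMinOn p {z | f z = c} (c • u) := by
  intro z (hz : f z = c)
  rcases eq_or_ne c 0 with rfl | hc
  · simp
  have h1 : p u ≤ p (c⁻¹ • z) := hu (by simp [hz, hc] : f (c⁻¹ • z) = 1)
  calc p (c • u) = ‖c‖ * p u := map_smul_eq_mul p c u
    _ ≤ ‖c‖ * p (c⁻¹ • z) := by gcongr
    _ = p z := by
      rw [map_smul_eq_mul, ← mul_assoc, norm_inv, mul_inv_cancel₀ (norm_ne_zero_iff.2 hc),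
        one_mul]

theorem eq_smul_of_isMinOn_level (hp0 : ∀ x, p x = 0 → x = 0)
    (hsc : p.IsStrictlyConvex)
    (f : E →ₗ[ℝ] ℝ) {u q : E} {c : ℝ} (hu : IsMinOn p {z | f z = 1} u) (hfu : f u = 1)
    (hq : IsMinOn p {z | f z = c} q) (hfq : f q = c) : q = c • u :=
  eq_of_isMinOn_of_strictConvex hp0 hsc (convex_hyperplane f.isLinear c) hfq
    (by simp [hfu]) hq (isMinOn_smul_of_isMinOn_level_one f hu c)

end Module

theorem hasFDerivAt_apply_self {E : Type*} [NormedAddCommGroup E] [NormedSpace ℝ E]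
    {p : Seminorm ℝ E} {x : E} {p' : E →L[ℝ] ℝ} (h : HasFDerivAt p p' x) : p' x = p x := by
  have hline : HasDerivAt (fun t : ℝ => p (t • x)) (p' x) 1 := by
    have hsmul : HasDerivAt (fun t : ℝ => t • x) x 1 := by
      simpa using (hasDerivAt_id' (1 : ℝ)).smul_const x
    exact h.comp_hasDerivAt_of_eq (1 : ℝ) hsmul (one_smul ℝ x).symm
  have hray : (fun t : ℝ => p (t • x)) =ᶠ[𝓝 1] fun t => t * p x := by
    filter_upwards [eventually_gt_nhds one_pos] with t ht
    rw [map_smul_eq_mul, Real.norm_of_nonneg ht.le]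
  exact hline.unique ((hasDerivAt_mul_const (p x)).congr_of_eventuallyEq hray)

end Seminorm

theorem ConvexOn.le_sub_of_hasFDerivAt {E : Type*} [NormedAddCommGroup E] [NormedSpace ℝ E]
    {f : E → ℝ} {s : Set E} (hf : ConvexOn ℝ s f) {x y : E} (hx : x ∈ s) (hy : y ∈ s)
    {f' : E →L[ℝ] ℝ} (hf' : HasFDerivAt f f' x) : f' (y - x) ≤ f y - f x := by
  have hline : HasDerivAt (fun t : ℝ => f (AffineMap.lineMap x y t)) (f' (y - x)) 0 := by
    simp only [AffineMap.lineMap_apply_module', add_comm]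
    exact hf'.hasLineDerivAt (y - x)
  simpa [slope_def_field] using (hf.comp_affineMap (AffineMap.lineMap x y)).le_slope_of_hasDerivAt
    (by simpa using hx) (by simpa using hy) one_pos hline

theorem IsMinOn.hasGradientAt_mem_span_singleton {E : Type*} [NormedAddCommGroup E]
    [InnerProductSpace ℝ E] [CompleteSpace E] {f : E → ℝ} {w v g : E}
    (hmin : IsMinOn f {z | ⟪z, w⟫ = ⟪v, w⟫} v) (hg : HasGradientAt f g v) : g ∈ ℝ ∙ w := by
  rw [← Submodule.orthogonal_orthogonal (ℝ ∙ w), Submodule.mem_orthogonal]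
  intro h hh
  rw [Submodule.mem_orthogonal_singleton_iff_inner_left] at hh
  have hloc : IsLocalMin (fun t : ℝ => f (v + t • h)) 0 :=
    Eventually.of_forall fun t => by
      have hvt : ⟪v + t • h, w⟫ = ⟪v, w⟫ := by simp [inner_add_left, inner_smul_left, hh]
      simpa using hmin hvt
  have := hloc.hasDerivAt_eq_zero (hg.hasFDerivAt.hasLineDerivAt h)
  simpa [real_inner_comm] using this

section InnerProductSpace

variable {E : Type*} [NormedAddCommGroup E] [InnerProductSpace ℝ E] {p : Seminorm ℝ E} {w : E}

def IsClosestPointProjection (p : E → ℝ) (w : E) (P : E → E) : Prop :=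
  ∀ x, ⟪P x, w⟫ = 0 ∧ ∀ y, ⟪y, w⟫ = 0 → p (x - P x) ≤ p (x - y)

theorem IsClosestPointProjection.isMinOn_sub {P : E → E}
    (hP : IsClosestPointProjection p w P) (x : E) :
    IsMinOn p {z | ⟪z, w⟫ = ⟪x, w⟫} (x - P x) := by
  intro z (hz : ⟪z, w⟫ = ⟪x, w⟫)
  simpa using (hP x).2 (x - z) (by rw [inner_sub_left, hz, sub_self])

theorem IsClosestPointProjection.eq_sub_inner_smul (hp0 : ∀ x, p x = 0 → x = 0)
    (hsc : p.IsStrictlyConvex) {P : E → E}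
    (hP : IsClosestPointProjection p w P) {u : E}
    (hu : IsMinOn p {z | ⟪z, w⟫ = 1} u) (huw : ⟪u, w⟫ = 1) (x : E) :
    P x = x - ⟪x, w⟫ • u := by
  have hxw : ⟪x - P x, w⟫ = ⟪x, w⟫ := by rw [inner_sub_left, (hP x).1, sub_zero]
  rw [← Seminorm.eq_smul_of_isMinOn_level hp0 hsc ((innerₗ E).flip w) hu huw
    (hP.isMinOn_sub x) hxw, sub_sub_cancel]

variable [CompleteSpace E] {u : E}

theorem gradient_inv_smul_eq_of_isMinOn_level (hp0 : ∀ x, p x = 0 → x = 0)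
    (hu : IsMinOn p {z | ⟪z, w⟫ = 1} u) (huw : ⟪u, w⟫ = 1)
    (hd : DifferentiableAt ℝ p ((p u)⁻¹ • u)) : gradient p ((p u)⁻¹ • u) = p u • w := by
  have hpu : 0 < p u := Seminorm.apply_pos_of_ne_zero hp0 fun h => by simp [h] at huw
  set v := (p u)⁻¹ • u
  have hvw : ⟪v, w⟫ = (p u)⁻¹ := by simp [v, real_inner_smul_left, huw]
  have hv : IsMinOn p {z | ⟪z, w⟫ = ⟪v, w⟫} v := by
    rw [hvw]
    exact Seminorm.isMinOn_smul_of_isMinOn_level_one ((innerₗ E).flip w) hu _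
  obtain ⟨r, hr⟩ := Submodule.mem_span_singleton.1
    (hv.hasGradientAt_mem_span_singleton hd.hasGradientAt)
  have heuler := Seminorm.hasFDerivAt_apply_self hd.hasGradientAt.hasFDerivAt
  rw [InnerProductSpace.toDual_apply_apply, ← hr, real_inner_smul_left, real_inner_comm, hvw,
    Seminorm.apply_inv_smul_self hpu] at heuler
  rw [← hr, (mul_inv_eq_one₀ hpu.ne').1 heuler]

theorem eq_inv_smul_of_hasGradientAt_eq_smul (hp0 : ∀ x, p x = 0 → x = 0)
    (hsc : p.IsStrictlyConvex)
    (hu : IsMinOn p {z | ⟪z, w⟫ = 1} u) (huw : ⟪u, w⟫ = 1) {v : E} {c : ℝ} (hpv : p v = 1)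
    (hc : 0 ≤ c) (hg : HasGradientAt p (c • w) v) : v = (p u)⁻¹ • u := by
  have heuler := Seminorm.hasFDerivAt_apply_self hg.hasFDerivAt
  rw [InnerProductSpace.toDual_apply_apply, real_inner_smul_left, real_inner_comm, hpv] at heuler
  have hvw : 0 < ⟪v, w⟫ := pos_of_mul_pos_right (heuler ▸ one_pos) hc
  have hv : IsMinOn p {z | ⟪z, w⟫ = ⟪v, w⟫} v := by
    intro z (hz : ⟪z, w⟫ = ⟪v, w⟫)
    have := p.convexOn.le_sub_of_hasFDerivAt (mem_univ v) (mem_univ z) hg.hasFDerivAt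
    rw [InnerProductSpace.toDual_apply_apply, real_inner_smul_left, inner_sub_right,
      real_inner_comm, hz, real_inner_comm, sub_self, mul_zero] at this
    exact sub_nonneg.1 this
  have hvu := Seminorm.eq_smul_of_isMinOn_level hp0 hsc ((innerₗ E).flip w) hu huw hv rfl
  have : ⟪v, w⟫ = (p u)⁻¹ := by
    rw [hvu, map_smul_eq_mul, Real.norm_of_nonneg hvw.le] at hpv
    exact eq_inv_of_mul_eq_one_left hpv
  rwa [← this]

theorem inv_norm_smul_gradient_eq_iff (hp0 : ∀ x, p x = 0 → x = 0)
    (hsc : p.IsStrictlyConvex) (hw : ‖w‖ = 1)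
    (hu : IsMinOn p {z | ⟪z, w⟫ = 1} u) (huw : ⟪u, w⟫ = 1) {v : E} (hpv : p v = 1)
    (hd : DifferentiableAt ℝ p v) :
    ‖gradient p v‖⁻¹ • gradient p v = w ↔ v = (p u)⁻¹ • u := by
  constructor
  · intro hvw
    have hg : gradient p v = ‖gradient p v‖ • w := by
      rcases eq_or_ne (gradient p v) 0 with h | h
      · simp [h]
      · rw [← hvw, smul_inv_smul₀ (norm_ne_zero_iff.2 h)]
    exact eq_inv_smul_of_hasGradientAt_eq_smul hp0 hsc hu huw hpv (norm_nonneg _)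
      (hg ▸ hd.hasGradientAt)
  · rintro rfl
    have hpu : 0 < p u := Seminorm.apply_pos_of_ne_zero hp0 fun h => by simp [h] at huw
    rw [gradient_inv_smul_eq_of_isMinOn_level hp0 hu huw hd, norm_smul, hw, mul_one,
      Real.norm_of_nonneg hpu.le, inv_smul_smul₀ hpu.ne']

end InnerProductSpace

/-- **Closest-point projections onto hyperplanes for a strictly convex
`C¹`-regular norm are linear and surjective** (Iseli, Lemma 3.2): for a unit
vector `w` and the hyperplane `V = w⊥`, the closest-point projection
`P = P^N_V : ℝⁿ → V` is linear, has range `V`, and its kernel is the line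
spanned by the unique `v ∈ S_N` with `G v = w`, i.e. `ker P = ℝ • G⁻¹(w)`. -/
theorem closest_point_projection_linear (n : ℕ)
    (N : EuclideanSpace ℝ (Fin n) → ℝ)
    (hN0 : ∀ x, N x = 0 ↔ x = 0)
    (hNhom : ∀ (c : ℝ) (x), N (c • x) = |c| * N x)
    (hNtri : ∀ x y, N (x + y) ≤ N x + N y)
    (hNsc : ∀ x y, N x = 1 → N y = 1 → x ≠ y → N ((1 / 2 : ℝ) • (x + y)) < 1)
    (hNC1 : ContDiffOn ℝ 1 N {(0 : EuclideanSpace ℝ (Fin n))}ᶜ)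
    (G : EuclideanSpace ℝ (Fin n) → EuclideanSpace ℝ (Fin n))
    (hG : ∀ x, N x = 1 → G x = ‖gradient N x‖⁻¹ • gradient N x)
    (w : EuclideanSpace ℝ (Fin n)) (hw : ‖w‖ = 1)
    (P : EuclideanSpace ℝ (Fin n) → EuclideanSpace ℝ (Fin n))
    (hP : ∀ x, (inner ℝ (P x) w : ℝ) = 0 ∧
      ∀ y, (inner ℝ y w : ℝ) = 0 → N (x - P x) ≤ N (x - y)) :
    IsLinearMap ℝ P ∧
    range P = {x | (inner ℝ x w : ℝ) = 0} ∧
    ∃ v, N v = 1 ∧ G v = w ∧ (∀ v', N v' = 1 → G v' = w → v' = v) ∧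
      {x | P x = 0} = {x | ∃ c : ℝ, x = c • v} := by
  obtain ⟨p, rfl⟩ : ∃ p : Seminorm ℝ (EuclideanSpace ℝ (Fin n)), ⇑p = N :=
    ⟨Seminorm.of N hNtri hNhom, rfl⟩
  have hp0 : ∀ x, p x = 0 → x = 0 := fun x => (hN0 x).1
  have hdiff : ∀ x, p x = 1 → DifferentiableAt ℝ p x := fun x hx =>
    (hNC1.contDiffAt (isOpen_compl_singleton.mem_nhds (by rintro rfl; simp at hx))).differentiableAt
      one_ne_zero
  have hww : ⟪w, w⟫ = 1 := by rw [real_inner_self_eq_norm_sq, hw, one_pow]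
  set u := w - P w
  have huw : ⟪u, w⟫ = 1 := by rw [inner_sub_left, (hP w).1, hww, sub_zero]
  have hu : IsMinOn p {z | ⟪z, w⟫ = 1} u := hww ▸ IsClosestPointProjection.isMinOn_sub hP w
  have hPx := IsClosestPointProjection.eq_sub_inner_smul hp0 hNsc hP hu huw
  have hpu : 0 < p u := Seminorm.apply_pos_of_ne_zero hp0 fun h => by simp [h] at huw
  set v := (p u)⁻¹ • u
  have hpv : p v = 1 := Seminorm.apply_inv_smul_self hpu
  have hGv : ∀ v', p v' = 1 → (G v' = w ↔ v' = v) := fun v' hpv' => by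
    rw [hG v' hpv', inv_norm_smul_gradient_eq_iff hp0 hNsc hw hu huw hpv' (hdiff v' hpv')]
  refine ⟨?_, ?_, v, hpv, (hGv v hpv).2 rfl, fun v' hpv' => (hGv v' hpv').1, ?_⟩
  · rw [funext hPx]
    exact (LinearMap.id - ((innerₗ (EuclideanSpace ℝ (Fin n))).flip w).smulRight u).isLinear
  · ext x
    exact ⟨fun ⟨y, hy⟩ => hy ▸ (hP y).1, fun hx => ⟨x, by simp [hPx, hx.out]⟩⟩
  · ext x
    change P x = 0 ↔ ∃ c : ℝ, x = c • v
    rw [hPx, sub_eq_zero]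
    refine ⟨fun hx => ⟨⟪x, w⟫ * p u, ?_⟩, ?_⟩
    · rw [mul_smul, smul_inv_smul₀ hpu.ne']; exact hx
    · rintro ⟨c, rfl⟩
      simp [v, real_inner_smul_left, huw, smul_smul]
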